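/- arXiv:1312.3393 — 4 statements merged into one kernel-verified Lean document; each statement's English description precedes it below -/
import Mathlib

section
/- Fix an integer K ≥ 2, a real α > 1/2, and an integer T ≥ 1. Then the probability that for some pair i < j the empirical means ever leave the confidence intervals — precisely, the probability of the event that there exist indices 1 ≤ i < j ≤ K and an integer n ≥ 1 such that either (n ≤ T and |μ^{ij}_n − p_{ij}| > √(α·ln T / n)) or (n > T and |μ^{ij}_n − p_{ij}| > √(α·ln n / n)) — is at most (4α−1)·K² / ((2α−1)·T^{2α−1}). (This is the probabilistic content of Lemma 1 of the paper, which asserts that all pairwise confidence intervals of a K-armed dueling bandit algorithm are simultaneously correct from time T onward with the stated failure probability.) -/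
/-!
For a fixed pair and sample size `n`, Hoeffding's inequality bounds the probability that the
empirical mean misses `p` by more than `ε = √(α log m / n)`, `m = max n T`, by
`2 exp (-2 n ε²) = 2 m ^ (-2α)`. Summed over `n ≥ 1` this is `2 T ^ (1 - 2α)` for `n ≤ T` plus,
by the integral test, at most `2 T ^ (1 - 2α) / (2α - 1)` for `n > T`. A union bound over the
`K.choose 2` pairs finishes the proof.
-/

open MeasureTheory ProbabilityTheory Real

lemma tsum_rpow_neg_nat_add_le {s : ℝ} (hs : 1 < s) {T : ℕ} (hT : 0 < T) :
    ∑' k : ℕ, ((k + T + 1 : ℕ) : ℝ) ^ (-s) ≤ (T : ℝ) ^ (1 - s) / (s - 1) := by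
  have hT' : (0 : ℝ) < T := by exact_mod_cast hT
  have hanti : AntitoneOn (fun x : ℝ ↦ x ^ (-s)) (Set.Ici T) := fun x hx y _ hxy ↦
    rpow_le_rpow_of_nonpos (hT'.trans_le hx) hxy (by linarith)
  calc ∑' k : ℕ, ((k + T + 1 : ℕ) : ℝ) ^ (-s)
      ≤ ∫ x in Set.Ioi (T : ℝ), x ^ (-s) :=
        hanti.tsum_comp_add_le_integral T (integrableOn_Ioi_rpow_of_lt (by linarith) hT')
          fun x hx ↦ rpow_nonneg (hT'.trans hx).le _
    _ = (T : ℝ) ^ (1 - s) / (s - 1) := by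
        rw [integral_Ioi_rpow_of_lt (by linarith) hT', show -s + 1 = 1 - s by ring,
          ← neg_div_neg_eq, neg_neg, neg_sub]

lemma tsum_ofReal_rpow_neg_max_le {s : ℝ} (hs : 1 < s) {T : ℕ} (hT : 0 < T) :
    ∑' n : ℕ, ENNReal.ofReal (((max (n + 1) T : ℕ) : ℝ) ^ (-s)) ≤
      ENNReal.ofReal (s / (s - 1) * (T : ℝ) ^ (1 - s)) := by
  have hT' : (0 : ℝ) < T := by exact_mod_cast hT
  have hhead : ∑ n ∈ Finset.range T, ENNReal.ofReal (((max (n + 1) T : ℕ) : ℝ) ^ (-s)) =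
      ENNReal.ofReal ((T : ℝ) ^ (1 - s)) := by
    rw [Finset.sum_congr rfl fun n hn ↦ by rw [max_eq_right (Finset.mem_range.1 hn)],
      Finset.sum_const, Finset.card_range, nsmul_eq_mul, ← ENNReal.ofReal_natCast,
      ← ENNReal.ofReal_mul hT'.le, sub_eq_add_neg, rpow_add hT', rpow_one]
  have hsummable : Summable fun k : ℕ ↦ ((k + T + 1 : ℕ) : ℝ) ^ (-s) :=
    (summable_nat_add_iff (T + 1)).2 (summable_nat_rpow.2 (by linarith))
  have htail : ∑' k : ℕ, ENNReal.ofReal (((max (k + T + 1) T : ℕ) : ℝ) ^ (-s)) ≤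
      ENNReal.ofReal ((T : ℝ) ^ (1 - s) / (s - 1)) := by
    simp_rw [show ∀ k, max (k + T + 1) T = k + T + 1 from fun k ↦ max_eq_left (by omega)]
    rw [← ENNReal.ofReal_tsum_of_nonneg (fun _ ↦ rpow_nonneg (Nat.cast_nonneg _) _) hsummable]
    exact ENNReal.ofReal_le_ofReal (tsum_rpow_neg_nat_add_le hs hT)
  rw [← ENNReal.summable.sum_add_tsum_nat_add' (k := T), hhead]
  calc _ ≤ ENNReal.ofReal ((T : ℝ) ^ (1 - s)) + ENNReal.ofReal ((T : ℝ) ^ (1 - s) / (s - 1)) :=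
        add_le_add_right htail _
    _ = _ := by
      rw [← ENNReal.ofReal_add (by positivity) (div_nonneg (by positivity) (by linarith))]
      have hs1 : s - 1 ≠ 0 := by linarith
      congr 1
      field_simp
      ring

namespace ProbabilityTheory.HasSubgaussianMGF

variable {Ω : Type*} [MeasurableSpace Ω] {μ : Measure Ω} {X : Ω → ℝ} {c : NNReal}

lemma measure_abs_ge_le [IsFiniteMeasure μ] (h : HasSubgaussianMGF X c μ) {ε : ℝ} (hε : 0 ≤ ε) :
    μ {ω | ε ≤ |X ω|} ≤ ENNReal.ofReal (2 * exp (-ε ^ 2 / (2 * c))) := by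
  have hsplit : {ω | ε ≤ |X ω|} ⊆ {ω | ε ≤ X ω} ∪ {ω | ε ≤ (-X) ω} := fun ω hω ↦ by
    rcases le_abs'.1 (show ε ≤ |X ω| from hω) with h | h
    · exact Or.inr (show ε ≤ -X ω by linarith)
    · exact Or.inl h
  have htail {Y : Ω → ℝ} (hY : HasSubgaussianMGF Y c μ) :
      μ {ω | ε ≤ Y ω} ≤ ENNReal.ofReal (exp (-ε ^ 2 / (2 * c))) := by
    rw [← ofReal_measureReal]
    exact ENNReal.ofReal_le_ofReal (hY.measure_ge_le hε)
  calc μ {ω | ε ≤ |X ω|}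
      ≤ μ {ω | ε ≤ X ω} + μ {ω | ε ≤ (-X) ω} := (measure_mono hsplit).trans (measure_union_le _ _)
    _ ≤ ENNReal.ofReal (exp (-ε ^ 2 / (2 * c))) + ENNReal.ofReal (exp (-ε ^ 2 / (2 * c))) :=
      add_le_add (htail h) (htail h.neg)
    _ = ENNReal.ofReal (2 * exp (-ε ^ 2 / (2 * c))) := by
      rw [← ENNReal.ofReal_add (exp_nonneg _) (exp_nonneg _)]
      ring_nf

end ProbabilityTheory.HasSubgaussianMGF

section

variable {Ω : Type*} [MeasurableSpace Ω] {μ : Measure Ω}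

noncomputable def empiricalMean (Y : ℕ → Ω → ℝ) (n : ℕ) (ω : Ω) : ℝ :=
  (∑ k ∈ Finset.range n, Y k ω) / n

lemma measure_abs_empiricalMean_sub_ge_le [IsProbabilityMeasure μ] {Y : ℕ → Ω → ℝ}
    (hind : iIndepFun Y μ) (hmeas : ∀ k, AEMeasurable (Y k) μ) {a b : ℝ}
    (hab : ∀ k, ∀ᵐ ω ∂μ, Y k ω ∈ Set.Icc a b) {p : ℝ} (hmean : ∀ k, μ[Y k] = p)
    {n : ℕ} (hn : 0 < n) {ε : ℝ} (hε : 0 ≤ ε) :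
    μ {ω | ε ≤ |empiricalMean Y n ω - p|} ≤
      ENNReal.ofReal (2 * exp (-2 * n * ε ^ 2 / (b - a) ^ 2)) := by
  have hn' : (0 : ℝ) < n := by exact_mod_cast hn
  have hsubG : ∀ k, HasSubgaussianMGF (fun ω ↦ Y k ω - p) ((‖b - a‖₊ / 2) ^ 2) μ := fun k ↦ by
    simpa only [hmean k] using hasSubgaussianMGF_of_mem_Icc (hmeas k) (hab k)
  have hsum := HasSubgaussianMGF.sum_of_iIndepFun
    (hind.comp (fun _ x ↦ x - p) fun _ ↦ measurable_id.sub_const p) (s := Finset.range n)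
    fun k _ ↦ hsubG k
  have hset : {ω | ε ≤ |empiricalMean Y n ω - p|} =
      {ω | n * ε ≤ |∑ k ∈ Finset.range n, (Y k ω - p)|} := by
    ext ω
    simp only [Set.mem_ofPred_eq, empiricalMean, Finset.sum_sub_distrib, Finset.sum_const,
      Finset.card_range, nsmul_eq_mul]
    rw [div_sub' hn'.ne', abs_div, abs_of_pos hn', le_div_iff₀ hn', mul_comm]
  have hc : ((∑ _k ∈ Finset.range n, (‖b - a‖₊ / 2) ^ 2 : NNReal) : ℝ) = n * (b - a) ^ 2 / 4 := by
    simp only [Finset.sum_const, Finset.card_range, nsmul_eq_mul]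
    push_cast
    rw [Real.norm_eq_abs, div_pow, sq_abs]
    ring
  rw [hset]
  refine (hsum.measure_abs_ge_le (by positivity)).trans (le_of_eq ?_)
  rw [hc]
  congr 3
  field_simp
  ring

lemma measure_sqrt_log_lt_abs_empiricalMean_sub_le [IsProbabilityMeasure μ] {Y : ℕ → Ω → ℝ}
    (hind : iIndepFun Y μ) (hmeas : ∀ k, AEMeasurable (Y k) μ)
    (hY : ∀ k, ∀ᵐ ω ∂μ, Y k ω ∈ Set.Icc 0 1) {p : ℝ} (hmean : ∀ k, μ[Y k] = p)
    {α : ℝ} (hα : 0 ≤ α) {n : ℕ} (hn : 0 < n) {m : ℝ} (hm : 1 ≤ m) :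
    μ {ω | √(α * log m / n) < |empiricalMean Y n ω - p|} ≤ ENNReal.ofReal (2 * m ^ (-(2 * α))) := by
  have hn' : (0 : ℝ) < n := by exact_mod_cast hn
  have hε : √(α * log m / n) ^ 2 = α * log m / n :=
    sq_sqrt (div_nonneg (mul_nonneg hα (log_nonneg hm)) hn'.le)
  have hsub : {ω | √(α * log m / n) < |empiricalMean Y n ω - p|} ⊆
      {ω | √(α * log m / n) ≤ |empiricalMean Y n ω - p|} :=
    Set.ofPred_subset_ofPred.2 fun _ ↦ le_of_lt
  refine (measure_mono hsub).trans
    ((measure_abs_empiricalMean_sub_ge_le hind hmeas hY hmean hn (sqrt_nonneg _)).trans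
      (le_of_eq ?_))
  rw [hε, rpow_def_of_pos (by linarith)]
  congr 3
  field_simp
  ring

lemma measure_iUnion_sqrt_log_lt_abs_empiricalMean_sub_le [IsProbabilityMeasure μ]
    {Y : ℕ → Ω → ℝ} (hind : iIndepFun Y μ) (hmeas : ∀ k, AEMeasurable (Y k) μ)
    (hY : ∀ k, ∀ᵐ ω ∂μ, Y k ω ∈ Set.Icc 0 1) {p : ℝ} (hmean : ∀ k, μ[Y k] = p)
    {α : ℝ} (hα : 1 / 2 < α) {T : ℕ} (hT : 0 < T) :
    μ (⋃ n : ℕ, {ω | √(α * log (max (n + 1) T : ℕ) / (n + 1 : ℕ)) <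
        |empiricalMean Y (n + 1) ω - p|}) ≤
      ENNReal.ofReal (4 * α / (2 * α - 1) * (T : ℝ) ^ (1 - 2 * α)) := by
  calc _ ≤ ∑' n : ℕ, ENNReal.ofReal (2 * ((max (n + 1) T : ℕ) : ℝ) ^ (-(2 * α))) :=
        (measure_iUnion_le _).trans <| ENNReal.tsum_le_tsum fun n ↦
          measure_sqrt_log_lt_abs_empiricalMean_sub_le hind hmeas hY hmean (by linarith)
            n.succ_pos (by exact_mod_cast hT.trans_le (le_max_right _ _))
    _ = 2 * ∑' n : ℕ, ENNReal.ofReal (((max (n + 1) T : ℕ) : ℝ) ^ (-(2 * α))) := by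
        simp_rw [ENNReal.ofReal_mul zero_le_two, ENNReal.ofReal_ofNat, ENNReal.tsum_mul_left]
    _ ≤ 2 * ENNReal.ofReal (2 * α / (2 * α - 1) * (T : ℝ) ^ (1 - 2 * α)) :=
        mul_le_mul_right (tsum_ofReal_rpow_neg_max_le (by linarith) hT) _
    _ = _ := by
        rw [← ENNReal.ofReal_ofNat, ← ENNReal.ofReal_mul zero_le_two]
        ring_nf

end

lemma cast_choose_two_mul_rpow_le {K : ℕ} {α : ℝ} (hα : 1 / 2 < α) {T : ℝ} (hT : 0 < T) :
    (K.choose 2 : ℝ) * (4 * α / (2 * α - 1) * T ^ (1 - 2 * α)) ≤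
      (4 * α - 1) * (K : ℝ) ^ 2 / ((2 * α - 1) * T ^ (2 * α - 1)) := by
  have h2α : 0 < 2 * α - 1 := by linarith
  have hpow : 0 < T ^ (2 * α - 1) := rpow_pos_of_pos hT _
  rw [Nat.cast_choose_two, show 1 - 2 * α = -(2 * α - 1) by ring, rpow_neg hT.le,
    le_div_iff₀ (mul_pos h2α hpow)]
  field_simp
  nlinarith [sq_nonneg (K : ℝ), (Nat.cast_nonneg K : (0 : ℝ) ≤ K)]

theorem stmt_0_general {Ω : Type*} [MeasurableSpace Ω] (μ : Measure Ω) [IsProbabilityMeasure μ]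
    (K : ℕ)
    (X : Fin K → Fin K → ℕ → Ω → ℝ) (p : Fin K → Fin K → ℝ)
    (hmeas : ∀ (i j : Fin K) (n : ℕ), i < j → Measurable (X i j n))
    (hrange : ∀ (i j : Fin K) (n : ℕ) (ω : Ω), i < j → X i j n ω ∈ Set.Icc (0 : ℝ) 1)
    (hindep : ∀ i j : Fin K, i < j → iIndepFun (X i j) μ)
    (hident : ∀ (i j : Fin K) (n : ℕ), i < j → IdentDistrib (X i j n) (X i j 0) μ μ)
    (hmean : ∀ i j : Fin K, i < j → ∫ ω, X i j 0 ω ∂μ = p i j)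
    (α : ℝ) (hα : 1 / 2 < α) (T : ℕ) (hT : 1 ≤ T) :
    μ {ω | ∃ i j : Fin K, i < j ∧ ∃ n : ℕ, 1 ≤ n ∧
        ((n ≤ T ∧
            |(∑ k ∈ Finset.range n, X i j k ω) / n - p i j| > Real.sqrt (α * Real.log T / n)) ∨
         (T < n ∧
            |(∑ k ∈ Finset.range n, X i j k ω) / n - p i j| > Real.sqrt (α * Real.log n / n)))}
      ≤ ENNReal.ofReal ((4 * α - 1) * (K : ℝ) ^ 2 / ((2 * α - 1) * (T : ℝ) ^ (2 * α - 1))) := by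
  set pairs := Finset.univ.filter fun x : Fin K × Fin K ↦ x.1 < x.2
  set F : Fin K × Fin K → Set Ω := fun x ↦ ⋃ n : ℕ,
    {ω | √(α * log (max (n + 1) T : ℕ) / (n + 1 : ℕ)) <
      |empiricalMean (X x.1 x.2) (n + 1) ω - p x.1 x.2|}
  have hpair : ∀ x ∈ pairs, μ (F x) ≤
      ENNReal.ofReal (4 * α / (2 * α - 1) * (T : ℝ) ^ (1 - 2 * α)) := fun x hx ↦ by
    have hx : x.1 < x.2 := by simpa [pairs] using hx
    exact measure_iUnion_sqrt_log_lt_abs_empiricalMean_sub_le (hindep _ _ hx)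
      (fun k ↦ (hmeas _ _ k hx).aemeasurable) (fun k ↦ ae_of_all _ (hrange _ _ k · hx))
      (fun k ↦ ((hident _ _ k hx).integral_eq).trans (hmean _ _ hx)) hα hT
  refine (measure_mono ?_).trans ((measure_biUnion_finset_le pairs F).trans ?_)
  · rintro ω ⟨i, j, hij, n, hn, hdev⟩
    obtain ⟨m, rfl⟩ : ∃ m, n = m + 1 := ⟨n - 1, by omega⟩
    refine Set.mem_iUnion₂.2 ⟨(i, j), by simpa [pairs] using hij, Set.mem_iUnion.2 ⟨m, ?_⟩⟩
    -- both radii of the statement are `√(α log (max n T) / n)`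
    rcases hdev with ⟨hle, hdev⟩ | ⟨hlt, hdev⟩
    · rw [Set.mem_ofPred_eq, max_eq_right hle]; exact hdev
    · rw [Set.mem_ofPred_eq, max_eq_left hlt.le]; exact hdev
  have hcard : pairs.card = K.choose 2 := by
    simpa using Fintype.card_product_filter_lt (α := Fin K)
  calc _ ≤ K.choose 2 * ENNReal.ofReal (4 * α / (2 * α - 1) * (T : ℝ) ^ (1 - 2 * α)) := by
        rw [← hcard, ← nsmul_eq_mul]
        exact Finset.sum_le_card_nsmul _ _ _ hpair
    _ ≤ _ := by
        rw [← ENNReal.ofReal_natCast, ← ENNReal.ofReal_mul (Nat.cast_nonneg _)]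
        exact ENNReal.ofReal_le_ofReal (cast_choose_two_mul_rpow_le hα (by exact_mod_cast hT))

/-- probabilistic content of Lemma 1: Fix an integer `K ≥ 2`, a real `α > 1/2`
and an integer `T ≥ 1`.  For each pair `i < j` of indices in `Fin K`, `X i j k` is the
`(k+1)`-st sample of an i.i.d. sequence of `[0,1]`-valued random variables with common mean
`p i j` (the sequences for different pairs live on the common probability space but need not
be independent of one another).  Then the probability that there exist a pair `i < j` and an
integer `n ≥ 1` such that either (`n ≤ T` and `|μ^{ij}_n − p_{ij}| > √(α·ln T / n)`) or
(`n > T` and `|μ^{ij}_n − p_{ij}| > √(α·ln n / n)`), where `μ^{ij}_n` is the empirical mean of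
the first `n` samples of pair `(i,j)`, is at most `(4α−1)·K² / ((2α−1)·T^{2α−1})`. -/
theorem stmt_0 {Ω : Type*} [MeasurableSpace Ω] (μ : Measure Ω) [IsProbabilityMeasure μ]
    (K : ℕ) (hK : 2 ≤ K)
    (X : Fin K → Fin K → ℕ → Ω → ℝ) (p : Fin K → Fin K → ℝ)
    (hp : ∀ i j : Fin K, i < j → p i j ∈ Set.Icc (0 : ℝ) 1)
    (hmeas : ∀ (i j : Fin K) (n : ℕ), i < j → Measurable (X i j n))
    (hrange : ∀ (i j : Fin K) (n : ℕ) (ω : Ω), i < j → X i j n ω ∈ Set.Icc (0 : ℝ) 1)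
    (hindep : ∀ i j : Fin K, i < j → iIndepFun (X i j) μ)
    (hident : ∀ (i j : Fin K) (n : ℕ), i < j → IdentDistrib (X i j n) (X i j 0) μ μ)
    (hmean : ∀ i j : Fin K, i < j → ∫ ω, X i j 0 ω ∂μ = p i j)
    (α : ℝ) (hα : 1 / 2 < α) (T : ℕ) (hT : 1 ≤ T) :
    μ {ω | ∃ i j : Fin K, i < j ∧ ∃ n : ℕ, 1 ≤ n ∧
        ((n ≤ T ∧
            |(∑ k ∈ Finset.range n, X i j k ω) / n - p i j| > Real.sqrt (α * Real.log T / n)) ∨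
         (T < n ∧
            |(∑ k ∈ Finset.range n, X i j k ω) / n - p i j| > Real.sqrt (α * Real.log n / n)))}
      ≤ ENNReal.ofReal ((4 * α - 1) * (K : ℝ) ^ 2 / ((2 * α - 1) * (T : ℝ) ^ (2 * α - 1))) :=
  stmt_0_general μ K X p hmeas hrange hindep hident hmean α hα T hT
end

section
/- (No self-comparisons of suboptimal arms after time C.) Under hypotheses (H1) and (H2), for every time t > C and every index i ≠ 1, it is not the case that c_t = i and d_t = i; that is, after time C a suboptimal arm is never compared against itself. -/
open Real

/-- `wins c d o i j t` = number of times arm `i` beat arm `j` strictly before time `t`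
(time steps are `1, 2, …`; at step `s` the pair `(c s, d s)` is compared and `o s = true`
iff arm `c s` won). -/
def wins {K : ℕ} (c d : ℕ → Fin K) (o : ℕ → Bool) (i j : Fin K) (t : ℕ) : ℕ :=
  ((Finset.Ico 1 t).filter
    (fun s => (c s = i ∧ d s = j ∧ o s = true) ∨ (c s = j ∧ d s = i ∧ o s = false))).card

/-- The upper confidence bound `u_{ij}(t)`, with `u_{ii}(t) = 1/2` and the convention that
each of the two fractions equals `1` when `w_{ij}(t) + w_{ji}(t) = 0`. -/
noncomputable def ucb {K : ℕ} (α : ℝ) (c d : ℕ → Fin K) (o : ℕ → Bool)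
    (i j : Fin K) (t : ℕ) : ℝ :=
  if i = j then 1 / 2
  else
    (if wins c d o i j t + wins c d o j i t = 0 then 1
     else (wins c d o i j t : ℝ) / ((wins c d o i j t : ℝ) + (wins c d o j i t : ℝ))) +
    Real.sqrt
      (if wins c d o i j t + wins c d o j i t = 0 then 1
       else α * Real.log t / ((wins c d o i j t : ℝ) + (wins c d o j i t : ℝ)))

/-- The lower confidence bound `l_{ij}(t) = 1 - u_{ji}(t)`. -/
noncomputable def lcb {K : ℕ} (α : ℝ) (c d : ℕ → Fin K) (o : ℕ → Bool)
    (i j : Fin K) (t : ℕ) : ℝ :=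
  1 - ucb α c d o j i t

/-- no self-comparisons of suboptimal arms after time `C`.  The arm `b` plays
the role of the Condorcet winner `a₁`.  Under (H1) and (H2), for every time `t > C` and every
arm `i ≠ b`, it is not the case that `c_t = i` and `d_t = i`; that is, after time `C` a
suboptimal arm is never compared against itself. -/
theorem stmt_5 (K : ℕ) (hK : 2 ≤ K) (α : ℝ) (hα : 1 / 2 < α)
    (p : Fin K → Fin K → ℝ) (b : Fin K)
    (hsym : ∀ i j : Fin K, p i j + p j i = 1)
    (hcond : ∀ j : Fin K, j ≠ b → 1 / 2 < p b j)
    (c d : ℕ → Fin K) (o : ℕ → Bool)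
    (C : ℝ) (hC : 1 ≤ C)
    (H1 : ∀ t : ℕ, C < (t : ℝ) → ∀ i j : Fin K,
      lcb α c d o i j t ≤ p i j ∧ p i j ≤ ucb α c d o i j t)
    (H2 : ∀ t : ℕ, C < (t : ℝ) →
      (∀ j : Fin K, 1 / 2 ≤ ucb α c d o (c t) j t) ∧
      (∀ j : Fin K, ucb α c d o j (c t) t ≤ ucb α c d o (d t) (c t) t)) :
    ∀ t : ℕ, C < (t : ℝ) → ∀ i : Fin K, i ≠ b → ¬(c t = i ∧ d t = i) := by
  rintro t ht i hib ⟨hc, hd⟩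
  have h2 := (H2 t ht).2 b
  rw [hc, hd] at h2
  have hii : ucb α c d o i i t = 1 / 2 := by simp [ucb]
  have h1 := (H1 t ht b i).2
  have h3 := hcond i hib
  rw [hii] at h2
  linarith
end

section
/- (Confidence-width dichotomy.) Under hypotheses (H1) and (H2), for every time t > C, if c_t = i and d_t = j with i ≠ j, then the confidence interval of the chosen pair is wide: u_{ij}(t) − l_{ij}(t) ≥ Δ_i = 1/2 − p_{i1}. -/
open Real

/-- confidence-width dichotomy.  The arm `b` plays the role of the Condorcet
winner `a₁`, and `Δ_i := 1/2 − p_{i b}`.  Under (H1) and (H2), for every time `t > C`, if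
`c_t = i` and `d_t = j` with `i ≠ j`, then the confidence interval of the chosen pair is
wide: `u_{ij}(t) − l_{ij}(t) ≥ Δ_i = 1/2 − p_{i b}`. -/
theorem stmt_6 (K : ℕ) (hK : 2 ≤ K) (α : ℝ) (hα : 1 / 2 < α)
    (p : Fin K → Fin K → ℝ) (b : Fin K)
    (hsym : ∀ i j : Fin K, p i j + p j i = 1)
    (hcond : ∀ j : Fin K, j ≠ b → 1 / 2 < p b j)
    (c d : ℕ → Fin K) (o : ℕ → Bool)
    (C : ℝ) (hC : 1 ≤ C)
    (H1 : ∀ t : ℕ, C < (t : ℝ) → ∀ i j : Fin K,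
      lcb α c d o i j t ≤ p i j ∧ p i j ≤ ucb α c d o i j t)
    (H2 : ∀ t : ℕ, C < (t : ℝ) →
      (∀ j : Fin K, 1 / 2 ≤ ucb α c d o (c t) j t) ∧
      (∀ j : Fin K, ucb α c d o j (c t) t ≤ ucb α c d o (d t) (c t) t)) :
    ∀ t : ℕ, C < (t : ℝ) → ∀ i j : Fin K, i ≠ j → c t = i → d t = j →
      1 / 2 - p i b ≤ ucb α c d o i j t - lcb α c d o i j t := by
  intro t ht i j hij hc hd
  have h2 := H2 t ht
  have hui : 1 / 2 ≤ ucb α c d o i j t := by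
    have := h2.1 j; rwa [hc] at this
  have huji : ucb α c d o b i t ≤ ucb α c d o j i t := by
    have := h2.2 b; rwa [hc, hd] at this
  have hp : p b i ≤ ucb α c d o b i t := (H1 t ht b i).2
  have hs := hsym i b
  unfold lcb
  linarith
end

section
/- (Single-pair anytime confidence bound.) For every real α > 1/2 and every integer T ≥ 1, the probability of the event that there exists an integer n ≥ 1 such that either (n ≤ T and |μ_n − p| > √(α·ln T / n)) or (n > T and |μ_n − p| > √(α·ln n / n)) is at most 4α / ((2α−1)·T^{2α−1}). -/
open MeasureTheory ProbabilityTheory Real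

/-!
By Hoeffding's inequality, the `n`-th empirical mean leaves the interval of radius
`√(α log M / n)` around `p`, where `M = max T n`, with probability at most `2 M^{-2α}`.
A union bound over `n` then gives `2 T · T^{-2α}` from the indices `n ≤ T` plus
`2 ∑_{n > T} n^{-2α} ≤ 2 T^{1-2α} / (2α - 1)` (comparison with `∫_T^∞ x^{-2α} dx`), and these add
up to `4α / ((2α - 1) T^{2α-1})`.
-/

open Finset
open scoped NNReal

section Hoeffding

variable {Ω : Type*} [MeasurableSpace Ω] {μ : Measure Ω}

lemma measureReal_abs_sum_range_ge_le_of_iIndepFun {X : ℕ → Ω → ℝ} (h_indep : iIndepFun X μ)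
    {c : ℝ≥0} {n : ℕ} (h_subG : ∀ i < n, HasSubgaussianMGF (X i) c μ) {ε : ℝ} (hε : 0 ≤ ε) :
    μ.real {ω | ε ≤ |∑ i ∈ range n, X i ω|} ≤ 2 * exp (-ε ^ 2 / (2 * n * c)) := by
  have := h_indep.isProbabilityMeasure
  have h_upper := HasSubgaussianMGF.measure_sum_range_ge_le_of_iIndepFun h_indep h_subG hε
  have h_lower := HasSubgaussianMGF.measure_sum_range_ge_le_of_iIndepFun (X := fun i ω ↦ -X i ω)
    (h_indep.comp (fun _ x ↦ -x) fun _ ↦ measurable_neg) (fun i hi ↦ (h_subG i hi).neg) hε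
  have h_split : {ω | ε ≤ |∑ i ∈ range n, X i ω|} ⊆
      {ω | ε ≤ ∑ i ∈ range n, X i ω} ∪ {ω | ε ≤ ∑ i ∈ range n, -X i ω} := fun ω hω ↦ by
    rcases le_abs'.1 (show ε ≤ |_| from hω) with h | h
    · exact Or.inr (by simp only [Set.mem_ofPred_eq, sum_neg_distrib]; linarith)
    · exact Or.inl h
  calc μ.real _ ≤ μ.real ({ω | ε ≤ ∑ i ∈ range n, X i ω} ∪ {ω | ε ≤ ∑ i ∈ range n, -X i ω}) :=
        measureReal_mono h_split
    _ ≤ _ := measureReal_union_le _ _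
    _ ≤ _ := by linarith

lemma measure_abs_sum_range_div_sub_gt_le [IsProbabilityMeasure μ] {X : ℕ → Ω → ℝ} {p : ℝ}
    (hmeas : ∀ k, AEMeasurable (X k) μ) (hrange : ∀ k, ∀ᵐ ω ∂μ, X k ω ∈ Set.Icc (0 : ℝ) 1)
    (hindep : iIndepFun X μ) (hmean : ∀ k, μ[X k] = p) {n : ℕ} (hn : 0 < n) {δ : ℝ}
    (hδ : 0 ≤ δ) :
    μ {ω | δ < |(∑ k ∈ range n, X k ω) / n - p|} ≤ ENNReal.ofReal (2 * exp (-2 * n * δ ^ 2)) := by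
  have hn' : (0 : ℝ) < n := Nat.cast_pos.2 hn
  have h_subG : ∀ k < n, HasSubgaussianMGF (fun ω ↦ X k ω - p) (1 / 4) μ := fun k _ ↦ by
    simpa [hmean k, div_pow, show (2 : ℝ≥0) ^ 2 = 4 by norm_num] using
      hasSubgaussianMGF_of_mem_Icc (hmeas k) (hrange k)
  have h_centered : ∀ ω, (∑ k ∈ range n, X k ω) / n - p = (∑ k ∈ range n, (X k ω - p)) / n :=
    fun ω ↦ by rw [sum_sub_distrib, sum_const, card_range, nsmul_eq_mul]; field_simp
  have h_sub : {ω | δ < |(∑ k ∈ range n, X k ω) / n - p|} ⊆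
      {ω | n * δ ≤ |∑ k ∈ range n, (X k ω - p)|} := fun ω hω ↦ by
    simp only [Set.mem_ofPred_eq, h_centered, abs_div, Nat.abs_cast, lt_div_iff₀ hn'] at hω ⊢
    linarith
  calc μ _ ≤ μ {ω | n * δ ≤ |∑ k ∈ range n, (X k ω - p)|} := measure_mono h_sub
    _ = ENNReal.ofReal (μ.real {ω | n * δ ≤ |∑ k ∈ range n, (X k ω - p)|}) :=
        (ofReal_measureReal).symm
    _ ≤ ENNReal.ofReal (2 * exp (-2 * n * δ ^ 2)) := by
        refine ENNReal.ofReal_le_ofReal ?_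
        refine (measureReal_abs_sum_range_ge_le_of_iIndepFun
          (hindep.comp (fun _ x ↦ x - p) fun _ ↦ measurable_id.sub_const p) h_subG
          (by positivity)).trans_eq ?_
        congr 2
        push_cast
        field_simp
        ring

end Hoeffding

lemma sum_range_rpow_neg_le {s : ℝ} (hs : 1 < s) {x₀ : ℝ} (hx₀ : 0 < x₀) (N : ℕ) :
    ∑ i ∈ range N, (x₀ + ↑(i + 1)) ^ (-s) ≤ x₀ ^ (1 - s) / (s - 1) := by
  have h_anti : AntitoneOn (fun x : ℝ ↦ x ^ (-s)) (Set.Icc x₀ (x₀ + N)) := fun x hx y _ hxy ↦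
    rpow_le_rpow_of_nonpos (hx₀.trans_le hx.1) hxy (by linarith)
  have h_zero : (0 : ℝ) ∉ Set.uIcc x₀ (x₀ + N) := by
    rw [Set.uIcc_of_le (le_add_of_nonneg_right N.cast_nonneg)]
    exact fun h ↦ (hx₀.trans_le h.1).false
  calc ∑ i ∈ range N, (x₀ + ↑(i + 1)) ^ (-s) ≤ ∫ x in x₀..x₀ + N, x ^ (-s) :=
        h_anti.sum_le_integral
    _ = (x₀ ^ (1 - s) - (x₀ + N) ^ (1 - s)) / (s - 1) := by
        rw [integral_rpow (Or.inr ⟨by linarith, h_zero⟩), neg_add_eq_sub, ← neg_sub s 1]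
        field_simp [show s - 1 ≠ 0 by linarith]
        ring
    _ ≤ x₀ ^ (1 - s) / (s - 1) := by
        gcongr ?_ / _
        exact sub_le_self _ (by positivity)

lemma tsum_ofReal_max_rpow_neg_le {s : ℝ} (hs : 1 < s) {T : ℕ} (hT : 0 < T) :
    ∑' m : ℕ, ENNReal.ofReal (((max T (m + 1) : ℕ) : ℝ) ^ (-s))
      ≤ ENNReal.ofReal (s / (s - 1) * (T : ℝ) ^ (1 - s)) := by
  have hT' : (0 : ℝ) < T := Nat.cast_pos.2 hT
  have h_head : ∑ m ∈ range T, ENNReal.ofReal (((max T (m + 1) : ℕ) : ℝ) ^ (-s))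
      = ENNReal.ofReal ((T : ℝ) ^ (1 - s)) := by
    rw [sum_congr rfl fun m hm ↦ by rw [max_eq_left (mem_range.1 hm)], sum_const, card_range,
      nsmul_eq_mul, ← ENNReal.ofReal_natCast, ← ENNReal.ofReal_mul hT'.le,
      ← rpow_one_add' hT'.le (by linarith), ← sub_eq_add_neg]
  have h_tail : ∑' m : ℕ, ENNReal.ofReal (((max T (m + T + 1) : ℕ) : ℝ) ^ (-s))
      ≤ ENNReal.ofReal ((T : ℝ) ^ (1 - s) / (s - 1)) := by
    refine ENNReal.tsum_le_of_sum_range_le fun N ↦ ?_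
    rw [← ENNReal.ofReal_sum_of_nonneg fun _ _ ↦ by positivity]
    refine ENNReal.ofReal_le_ofReal ((sum_le_sum fun m _ ↦ le_of_eq ?_).trans
      (sum_range_rpow_neg_le hs hT' N))
    rw [max_eq_right (by omega)]
    push_cast
    ring_nf
  rw [← ENNReal.summable.sum_add_tsum_nat_add' (k := T), h_head]
  calc _ ≤ ENNReal.ofReal ((T : ℝ) ^ (1 - s)) + ENNReal.ofReal ((T : ℝ) ^ (1 - s) / (s - 1)) := by
        gcongr
    _ = _ := by
        rw [← ENNReal.ofReal_add (by positivity) (div_nonneg (by positivity) (by linarith))]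
        congr 1
        field_simp [show s - 1 ≠ 0 by linarith]
        ring

theorem stmt_9_general {Ω : Type*} [MeasurableSpace Ω] (μ : Measure Ω) [IsProbabilityMeasure μ]
    (X : ℕ → Ω → ℝ) (p : ℝ)
    (hmeas : ∀ n, Measurable (X n))
    (hrange : ∀ n ω, X n ω ∈ Set.Icc (0 : ℝ) 1)
    (hindep : iIndepFun X μ)
    (hident : ∀ n, IdentDistrib (X n) (X 0) μ μ)
    (hmean : ∫ ω, X 0 ω ∂μ = p)
    (α : ℝ) (hα : 1 / 2 < α) (T : ℕ) (hT : 1 ≤ T) :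
    μ {ω | ∃ n : ℕ, 1 ≤ n ∧
        ((n ≤ T ∧ |(∑ k ∈ Finset.range n, X k ω) / n - p| > Real.sqrt (α * Real.log T / n)) ∨
         (T < n ∧ |(∑ k ∈ Finset.range n, X k ω) / n - p| > Real.sqrt (α * Real.log n / n)))}
      ≤ ENNReal.ofReal (4 * α / ((2 * α - 1) * (T : ℝ) ^ (2 * α - 1))) := by
  set B : ℕ → Set Ω := fun m ↦ {ω | sqrt (α * log ((max T (m + 1) : ℕ) : ℝ) / (m + 1 : ℕ)) <
    |(∑ k ∈ range (m + 1), X k ω) / (m + 1 : ℕ) - p|}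
  have h_bound (m : ℕ) :
      μ (B m) ≤ ENNReal.ofReal (2 * ((max T (m + 1) : ℕ) : ℝ) ^ (-(2 * α))) := by
    have hM : (1 : ℝ) ≤ ((max T (m + 1) : ℕ) : ℝ) := by exact_mod_cast le_max_of_le_left hT
    refine (measure_abs_sum_range_div_sub_gt_le (fun k ↦ (hmeas k).aemeasurable)
      (fun k ↦ ae_of_all _ (hrange k)) hindep (fun k ↦ (hident k).integral_eq.trans hmean)
      m.succ_pos (sqrt_nonneg _)).trans_eq ?_
    rw [sq_sqrt (div_nonneg (mul_nonneg (by linarith) (log_nonneg hM)) (Nat.cast_nonneg _)),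
      rpow_def_of_pos (by linarith)]
    congr 3
    field_simp
  calc μ _ ≤ μ (⋃ m, B m) := by
        refine measure_mono ?_
        rintro ω ⟨n, hn, h⟩
        refine Set.mem_iUnion.2 ⟨n - 1, ?_⟩
        simp only [B, Set.mem_ofPred_eq, Nat.sub_add_cancel hn]
        rcases h with ⟨hnT, h⟩ | ⟨hTn, h⟩
        · rwa [max_eq_left hnT]
        · rwa [max_eq_right hTn.le]
    _ ≤ ∑' m, μ (B m) := measure_iUnion_le B
    _ ≤ ∑' m, ENNReal.ofReal (2 * ((max T (m + 1) : ℕ) : ℝ) ^ (-(2 * α))) :=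
        ENNReal.tsum_le_tsum h_bound
    _ = 2 * ∑' m, ENNReal.ofReal (((max T (m + 1) : ℕ) : ℝ) ^ (-(2 * α))) := by
        simp_rw [ENNReal.ofReal_mul zero_le_two, ENNReal.tsum_mul_left, ENNReal.ofReal_ofNat]
    _ ≤ 2 * ENNReal.ofReal (2 * α / (2 * α - 1) * (T : ℝ) ^ (1 - 2 * α)) := by
        gcongr
        exact tsum_ofReal_max_rpow_neg_le (by linarith) hT
    _ = ENNReal.ofReal (4 * α / ((2 * α - 1) * (T : ℝ) ^ (2 * α - 1))) := by
        rw [← ENNReal.ofReal_ofNat 2, ← ENNReal.ofReal_mul zero_le_two, ← neg_sub,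
          rpow_neg (by positivity)]
        congr 1
        field_simp
        ring

/-- single-pair anytime confidence bound: For every real `α > 1/2` and every
integer `T ≥ 1`, the probability of the event that there exists an integer `n ≥ 1` such that
either (`n ≤ T` and `|μ_n − p| > √(α·ln T / n)`) or (`n > T` and `|μ_n − p| > √(α·ln n / n)`)
is at most `4α / ((2α−1)·T^{2α−1})`.  Here `X k` is the `(k+1)`-st sample of an i.i.d.
sequence of `[0,1]`-valued random variables with mean `p`, and `μ_n` is the empirical mean of
the first `n` samples. -/
theorem stmt_9 {Ω : Type*} [MeasurableSpace Ω] (μ : Measure Ω) [IsProbabilityMeasure μ]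
    (X : ℕ → Ω → ℝ) (p : ℝ) (hp : p ∈ Set.Icc (0 : ℝ) 1)
    (hmeas : ∀ n, Measurable (X n))
    (hrange : ∀ n ω, X n ω ∈ Set.Icc (0 : ℝ) 1)
    (hindep : iIndepFun X μ)
    (hident : ∀ n, IdentDistrib (X n) (X 0) μ μ)
    (hmean : ∫ ω, X 0 ω ∂μ = p)
    (α : ℝ) (hα : 1 / 2 < α) (T : ℕ) (hT : 1 ≤ T) :
    μ {ω | ∃ n : ℕ, 1 ≤ n ∧
        ((n ≤ T ∧ |(∑ k ∈ Finset.range n, X k ω) / n - p| > Real.sqrt (α * Real.log T / n)) ∨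
         (T < n ∧ |(∑ k ∈ Finset.range n, X k ω) / n - p| > Real.sqrt (α * Real.log n / n)))}
      ≤ ENNReal.ofReal (4 * α / ((2 * α - 1) * (T : ℝ) ^ (2 * α - 1))) :=
  stmt_9_general μ X p hmeas hrange hindep hident hmean α hα T hT
end
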